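/- arXiv:math/0610404 — 2 statements merged into one kernel-verified Lean document; each statement's English description precedes it below -/
import Mathlib

section
/- Let F be a field of characteristic p > 0 containing a finite subfield E with exactly p^n elements. Let W be the F-vector space with basis {E_i : −1 ≤ i ≤ p^n−2}, with bilinear bracket determined by [E_i, E_j] = (C(i+j+1, j) − C(i+j+1, i))·E_{i+j}, where E_s is read as 0 when s < −1 or s > p^n−2, and binomial coefficients C(a,b) of integers satisfy the convention C(a,b) = 0 unless 0 ≤ b ≤ a and are interpreted in F (this is the Zassenhaus algebra W(1;n)). For α ∈ E define e_α := E_{p^n−2} + Σ_{i=−1}^{p^n−2} α^(i+1)·E_i, with the convention 0^0 = 1 (so the i = −1 term of the sum is α^0·E_{−1} = E_{−1}). Then for all α, β ∈ E: [e_α, e_β] = (β − α)·e_{α+β}. -/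
/-- Binomial coefficient of integers, zero unless `0 ≤ b ≤ a`. -/
def intChoose (a b : ℤ) : ℤ :=
  if 0 ≤ b ∧ b ≤ a then (a.toNat.choose b.toNat : ℤ) else 0

variable (F : Type*) [Field F]

/-- The underlying space of the Zassenhaus algebra `W(1;n)`, where `N = p^n`; the basis
vector of index `a : Fin N` represents `E_{a-1}`. -/
abbrev Wsp (N : ℕ) : Type _ := Fin N → F

/-- The basis vector `E_i` of the Zassenhaus algebra, read as `0` when `i` lies outside
the range `[-1, N-2]`. -/
noncomputable def EE (N : ℕ) (i : ℤ) : Wsp F N :=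
  if h : -1 ≤ i ∧ i ≤ (N : ℤ) - 2 then Pi.single (⟨(i + 1).toNat, by omega⟩ : Fin N) 1
  else 0

/-- The bracket on basis elements, `[E_i, E_j] = (C(i+j+1,j) - C(i+j+1,i))·E_{i+j}`. -/
noncomputable def bBW (N : ℕ) (a b : Fin N) : Wsp F N :=
  ((intChoose (((a : ℤ) - 1) + ((b : ℤ) - 1) + 1) ((b : ℤ) - 1) -
      intChoose (((a : ℤ) - 1) + ((b : ℤ) - 1) + 1) ((a : ℤ) - 1) : ℤ) : F) •
    EE F N (((a : ℤ) - 1) + ((b : ℤ) - 1))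

/-- The bilinear bracket of the Zassenhaus algebra `W(1;n)`. -/
noncomputable def brW (N : ℕ) (u v : Wsp F N) : Wsp F N :=
  ∑ a : Fin N, ∑ b : Fin N, (u a * v b) • bBW F N a b

/-- The element `e_α = E_{N-2} + Σ_{i=-1}^{N-2} α^(i+1)·E_i` (with `0^0 = 1`). -/
noncomputable def eZ (N : ℕ) (α : F) : Wsp F N :=
  EE F N ((N : ℤ) - 2) + ∑ k ∈ Finset.range N, α ^ k • EE F N ((k : ℤ) - 1)

lemma intChoose_natCast (c a : ℕ) (h : a ≤ c) :
    intChoose (c : ℤ) (a : ℤ) = (c.choose a : ℤ) := by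
  unfold intChoose
  rw [if_pos ⟨Int.ofNat_nonneg a, by exact_mod_cast h⟩]
  simp

lemma intChoose_of_neg {c b : ℤ} (h : b < 0) : intChoose c b = 0 := by
  unfold intChoose; rw [if_neg (by omega)]

lemma intChoose_of_gt {c b : ℤ} (h : c < b) : intChoose c b = 0 := by
  unfold intChoose; rw [if_neg (by omega)]

lemma EE_apply (N : ℕ) (i : ℤ) (c : Fin N) :
    EE F N i c = if i = (c : ℤ) - 1 then 1 else 0 := by
  unfold EE
  have hc : (c : ℕ) < N := c.isLt
  split
  · next h =>
    rw [Pi.single_apply]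
    have : (c = (⟨(i + 1).toNat, by omega⟩ : Fin N)) ↔ i = (c : ℤ) - 1 := by
      rw [Fin.ext_iff]
      show (c : ℕ) = (i + 1).toNat ↔ _
      omega
    simp only [this]
  · next h =>
    rw [if_neg (by omega), Pi.zero_apply]

lemma eZ_apply (N : ℕ) (hN : 2 ≤ N) (γ : F) (c : Fin N) :
    eZ F N γ c = γ ^ (c : ℕ) + (if (c : ℕ) = N - 1 then 1 else 0) := by
  unfold eZ
  have hc : (c : ℕ) < N := c.isLt
  rw [Pi.add_apply, Finset.sum_apply]
  simp only [Pi.smul_apply, EE_apply, smul_eq_mul, mul_ite, mul_one, mul_zero]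
  rw [add_comm]
  congr 1
  · have : ∀ k ∈ Finset.range N, (if (k : ℤ) - 1 = (c : ℤ) - 1 then γ ^ k else 0)
        = (if k = (c : ℕ) then γ ^ k else 0) := by
      intro k _
      exact if_congr (by omega) rfl rfl
    rw [Finset.sum_congr rfl this, Finset.sum_ite_eq' (Finset.range N) (c : ℕ) (fun k => γ ^ k),
      if_pos (Finset.mem_range.2 hc)]
  · exact if_congr (by omega) rfl rfl

lemma brW_apply (N : ℕ) (u v : Wsp F N) (c : Fin N) :
    brW F N u v c = ∑ a : Fin N, ∑ b : Fin N,
      (if (a : ℕ) + (b : ℕ) = (c : ℕ) + 1 then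
        u a * v b *
          (((intChoose ((c : ℕ) : ℤ) (((b : ℕ) : ℤ) - 1) -
              intChoose ((c : ℕ) : ℤ) (((a : ℕ) : ℤ) - 1)) : ℤ) : F)
      else 0) := by
  unfold brW bBW
  rw [Finset.sum_apply]
  refine Finset.sum_congr rfl fun a _ => ?_
  rw [Finset.sum_apply]
  refine Finset.sum_congr rfl fun b _ => ?_
  rw [Pi.smul_apply, Pi.smul_apply, EE_apply, smul_eq_mul, smul_eq_mul]
  by_cases h : (a : ℕ) + (b : ℕ) = (c : ℕ) + 1
  · rw [if_pos h, if_pos (by omega : ((a : ℤ) - 1) + ((b : ℤ) - 1) = (c : ℤ) - 1)]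
    have h1 : ((a : ℤ) - 1) + ((b : ℤ) - 1) + 1 = ((c : ℕ) : ℤ) := by omega
    rw [h1]
    have h2 : ((a : ℤ)) = (((a : ℕ) : ℤ)) := by omega
    have h3 : ((b : ℤ)) = (((b : ℕ) : ℤ)) := by omega
    rw [h2, h3]; ring
  · rw [if_neg h, if_neg (by omega)]
    simp

lemma sum_reindex (N c : ℕ) (G : ℕ → ℕ → F) :
    (∑ a ∈ Finset.range N, ∑ b ∈ Finset.range N, if a + b = c + 1 then G a b else 0)
    = ∑ a ∈ Finset.range (c + 2), (if a < N ∧ c + 1 - a < N then G a (c + 1 - a) else 0) := by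
  have inner : ∀ a, (∑ b ∈ Finset.range N, if a + b = c + 1 then G a b else 0)
      = if a ≤ c + 1 ∧ c + 1 - a < N then G a (c + 1 - a) else 0 := by
    intro a
    by_cases h : a ≤ c + 1 ∧ c + 1 - a < N
    · rw [if_pos h, Finset.sum_eq_single_of_mem (c + 1 - a) (Finset.mem_range.2 h.2)]
      · rw [if_pos (by omega)]
      · intro b _ hb; rw [if_neg (by omega)]
    · rw [if_neg h]
      refine Finset.sum_eq_zero fun b hb => ?_
      have := Finset.mem_range.1 hb
      rw [if_neg (by omega)]
  rw [Finset.sum_congr rfl fun a _ => inner a]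
  have eL : ∀ a ∈ Finset.range N,
      (if a ≤ c + 1 ∧ c + 1 - a < N then G a (c + 1 - a) else 0)
      = (if a ≤ c + 1 ∧ a < N ∧ c + 1 - a < N then G a (c + 1 - a) else 0) := by
    intro a ha
    have := Finset.mem_range.1 ha
    exact if_congr (by omega) rfl rfl
  have eR : ∀ a ∈ Finset.range (c + 2),
      (if a < N ∧ c + 1 - a < N then G a (c + 1 - a) else 0)
      = (if a ≤ c + 1 ∧ a < N ∧ c + 1 - a < N then G a (c + 1 - a) else 0) := by
    intro a ha
    have := Finset.mem_range.1 ha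
    exact if_congr (by omega) rfl rfl
  rw [Finset.sum_congr rfl eL, Finset.sum_congr rfl eR]
  rcases le_total N (c + 2) with h | h
  · rw [← Finset.sum_subset (Finset.range_subset_range.2 h)]
    intro x _ hx
    have : ¬ _ < _ := fun h => hx (Finset.mem_range.2 h)
    have := Nat.le_of_not_lt this
    rw [if_neg (by omega)]
  · rw [Finset.sum_subset (Finset.range_subset_range.2 h)]
    intro x _ hx
    have : ¬ _ < _ := fun h => hx (Finset.mem_range.2 h)
    have := Nat.le_of_not_lt this
    rw [if_neg (by omega)]

lemma key (c : ℕ) (α β : F) :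
    ∑ a ∈ Finset.range (c + 2), α ^ a * β ^ (c + 1 - a) *
      (((intChoose (c : ℤ) (((c + 1 - a : ℕ) : ℤ) - 1) -
          intChoose (c : ℤ) ((a : ℤ) - 1)) : ℤ) : F)
    = (β - α) * (α + β) ^ c := by
  have hA : (∑ a ∈ Finset.range (c + 2), α ^ a * β ^ (c + 1 - a) *
      ((intChoose (c : ℤ) (((c + 1 - a : ℕ) : ℤ) - 1) : ℤ) : F)) = β * (α + β) ^ c := by
    rw [Finset.sum_range_succ]
    have h0 : (c + 1 - (c + 1) : ℕ) = 0 := by omega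
    rw [h0]
    have h1 : (((0 : ℕ) : ℤ) - 1) = -1 := by norm_num
    rw [h1, intChoose_of_neg (show (-1:ℤ) < 0 by norm_num), Int.cast_zero, mul_zero, add_zero]
    rw [add_pow, Finset.mul_sum]
    refine Finset.sum_congr rfl fun a ha => ?_
    have ha' : a ≤ c := by have := Finset.mem_range.1 ha; omega
    have h2 : ((c + 1 - a : ℕ) : ℤ) - 1 = ((c - a : ℕ) : ℤ) := by omega
    rw [h2, intChoose_natCast c (c - a) (by omega), Nat.choose_symm ha']
    have h3 : c + 1 - a = (c - a) + 1 := by omega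
    rw [h3, pow_succ]
    push_cast
    ring
  have hB : (∑ a ∈ Finset.range (c + 2), α ^ a * β ^ (c + 1 - a) *
      ((intChoose (c : ℤ) ((a : ℤ) - 1) : ℤ) : F)) = α * (α + β) ^ c := by
    rw [Finset.sum_range_succ']
    have h1 : (((0 : ℕ) : ℤ) - 1) = -1 := by norm_num
    rw [h1, intChoose_of_neg (show (-1:ℤ) < 0 by norm_num), Int.cast_zero, mul_zero, add_zero]
    rw [add_pow, Finset.mul_sum]
    refine Finset.sum_congr rfl fun a ha => ?_
    have ha' : a ≤ c := by have := Finset.mem_range.1 ha; omega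
    have h2 : ((a + 1 : ℕ) : ℤ) - 1 = ((a : ℕ) : ℤ) := by push_cast; ring
    rw [h2, intChoose_natCast c a ha']
    have h3 : c + 1 - (a + 1) = c - a := by omega
    rw [h3, pow_succ]
    push_cast
    ring
  calc ∑ a ∈ Finset.range (c + 2), α ^ a * β ^ (c + 1 - a) *
        (((intChoose (c : ℤ) (((c + 1 - a : ℕ) : ℤ) - 1) -
            intChoose (c : ℤ) ((a : ℤ) - 1)) : ℤ) : F)
      = (∑ a ∈ Finset.range (c + 2), α ^ a * β ^ (c + 1 - a) *
          ((intChoose (c : ℤ) (((c + 1 - a : ℕ) : ℤ) - 1) : ℤ) : F))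
        - (∑ a ∈ Finset.range (c + 2), α ^ a * β ^ (c + 1 - a) *
          ((intChoose (c : ℤ) ((a : ℤ) - 1) : ℤ) : F)) := by
        rw [← Finset.sum_sub_distrib]
        refine Finset.sum_congr rfl fun a _ => ?_
        push_cast
        ring
    _ = (β - α) * (α + β) ^ c := by rw [hA, hB]; ring

lemma pow_card_fix (p n : ℕ) (hp : p.Prime) (hn : 0 < n) [CharP F p]
    (E : Subfield F) (hcard : Nat.card E = p ^ n) {α : F} (hα : α ∈ E) :
    α ^ (p ^ n) = α := by
  have hfin : Finite E := Nat.finite_of_card_ne_zero (by rw [hcard]; exact (pow_pos hp.pos n).ne')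
  have : Fintype E := Fintype.ofFinite E
  have hcard' : Fintype.card E = p ^ n := by rw [← Nat.card_eq_fintype_card, hcard]
  have h := FiniteField.pow_card (⟨α, hα⟩ : E)
  rw [hcard'] at h
  have := congrArg (Subtype.val) h
  simpa using this

/-- for `α, β` in a subfield `E` of `F` with `p^n` elements,
`[e_α, e_β] = (β - α)·e_{α+β}` in the Zassenhaus algebra `W(1;n)`. -/
theorem stmt18 (p : ℕ) (hp : p.Prime) [CharP F p] (n : ℕ) (hn : 0 < n)
    (E : Subfield F) (hcard : Nat.card E = p ^ n) :
    ∀ α ∈ E, ∀ β ∈ E,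
      brW F (p ^ n) (eZ F (p ^ n) α) (eZ F (p ^ n) β) =
        (β - α) • eZ F (p ^ n) (α + β) := by
  intro α hα β hβ
  set N := p ^ n with hNdef
  have hN : 2 ≤ N := Nat.one_lt_pow hn.ne' hp.one_lt
  have hNF : ((N : ℕ) : F) = 0 := by
    rw [hNdef, Nat.cast_pow, CharP.cast_eq_zero F p, zero_pow hn.ne']
  have hαN : α ^ N = α := pow_card_fix F p n hp hn E hcard hα
  have hβN : β ^ N = β := pow_card_fix F p n hp hn E hcard hβ
  funext c
  set m := (c : ℕ) with hm
  have hmN : m < N := c.isLt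
  rw [Pi.smul_apply, smul_eq_mul, eZ_apply F N hN, brW_apply]
  have step1 : (∑ a : Fin N, ∑ b : Fin N,
      (if (a : ℕ) + (b : ℕ) = m + 1 then
        eZ F N α a * eZ F N β b *
          (((intChoose ((m : ℕ) : ℤ) (((b : ℕ) : ℤ) - 1) -
              intChoose ((m : ℕ) : ℤ) (((a : ℕ) : ℤ) - 1)) : ℤ) : F)
      else 0))
      = ∑ a ∈ Finset.range N, ∑ b ∈ Finset.range N,
        (if a + b = m + 1 then
          ((α ^ a + if a = N - 1 then 1 else 0) * (β ^ b + if b = N - 1 then 1 else 0)) *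
            (((intChoose ((m : ℕ) : ℤ) (((b : ℕ) : ℤ) - 1) -
                intChoose ((m : ℕ) : ℤ) (((a : ℕ) : ℤ) - 1)) : ℤ) : F)
        else 0) := by
    rw [← Fin.sum_univ_eq_sum_range (fun a => ∑ b ∈ Finset.range N,
      (if a + b = m + 1 then
        ((α ^ a + if a = N - 1 then 1 else 0) * (β ^ b + if b = N - 1 then 1 else 0)) *
          (((intChoose ((m : ℕ) : ℤ) (((b : ℕ) : ℤ) - 1) -
              intChoose ((m : ℕ) : ℤ) (((a : ℕ) : ℤ) - 1)) : ℤ) : F)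
      else 0)) N]
    refine Finset.sum_congr rfl fun a _ => ?_
    rw [← Fin.sum_univ_eq_sum_range (fun b =>
      (if (a : ℕ) + b = m + 1 then
        ((α ^ (a : ℕ) + if (a : ℕ) = N - 1 then 1 else 0) * (β ^ b + if b = N - 1 then 1 else 0)) *
          (((intChoose ((m : ℕ) : ℤ) (((b : ℕ) : ℤ) - 1) -
              intChoose ((m : ℕ) : ℤ) (((a : ℕ) : ℤ) - 1)) : ℤ) : F)
      else 0)) N]
    refine Finset.sum_congr rfl fun b _ => ?_
    rw [eZ_apply F N hN α a, eZ_apply F N hN β b]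
  rw [step1, sum_reindex, ← hm]
  by_cases hcN : m + 1 < N
  · -- Case A: all if-conditions hold
    have hcond : ∀ a ∈ Finset.range (m + 2),
        (if a < N ∧ m + 1 - a < N then
          (α ^ a + if a = N - 1 then 1 else 0) *
              (β ^ (m + 1 - a) + if m + 1 - a = N - 1 then 1 else 0) *
            ((intChoose (m : ℤ) (((m + 1 - a : ℕ) : ℤ) - 1) -
                intChoose (m : ℤ) ((a : ℤ) - 1) : ℤ) : F)
        else 0)
        = α ^ a * β ^ (m + 1 - a) *
            ((intChoose (m : ℤ) (((m + 1 - a : ℕ) : ℤ) - 1) -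
                intChoose (m : ℤ) ((a : ℤ) - 1) : ℤ) : F)
          + (if a = m + 1 ∧ m + 1 = N - 1 then
              ((intChoose (m : ℤ) (((m + 1 - a : ℕ) : ℤ) - 1) -
                intChoose (m : ℤ) ((a : ℤ) - 1) : ℤ) : F) else 0)
          + (if a = 0 ∧ m + 1 = N - 1 then
              ((intChoose (m : ℤ) (((m + 1 - a : ℕ) : ℤ) - 1) -
                intChoose (m : ℤ) ((a : ℤ) - 1) : ℤ) : F) else 0) := by
      intro a ha
      have ha' : a ≤ m + 1 := by have := Finset.mem_range.1 ha; omega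
      rw [if_pos ⟨by omega, by omega⟩]
      by_cases hx : a = N - 1 <;> by_cases hy : m + 1 - a = N - 1
      · omega
      · rw [if_pos hx, if_neg hy, if_pos (by omega : a = m + 1 ∧ m + 1 = N - 1),
          if_neg (by omega : ¬(a = 0 ∧ m + 1 = N - 1))]
        have h0 : m + 1 - a = 0 := by omega
        rw [h0, pow_zero]
        ring
      · rw [if_neg hx, if_pos hy, if_neg (by omega : ¬(a = m + 1 ∧ m + 1 = N - 1)),
          if_pos (by omega : a = 0 ∧ m + 1 = N - 1)]
        have h0 : a = 0 := by omega
        subst h0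
        rw [pow_zero]
        ring
      · rw [if_neg hx, if_neg hy, if_neg (by omega : ¬(a = m + 1 ∧ m + 1 = N - 1)),
          if_neg (by omega : ¬(a = 0 ∧ m + 1 = N - 1))]
        ring
    rw [Finset.sum_congr rfl hcond, Finset.sum_add_distrib, Finset.sum_add_distrib, key]
    by_cases hb : m + 1 = N - 1
    · have e1 : ∀ a ∈ Finset.range (m + 2),
          (if a = m + 1 ∧ m + 1 = N - 1 then
            ((intChoose (m : ℤ) (((m + 1 - a : ℕ) : ℤ) - 1) -
                intChoose (m : ℤ) ((a : ℤ) - 1) : ℤ) : F) else 0)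
          = (if a = m + 1 then
            ((intChoose (m : ℤ) (((m + 1 - a : ℕ) : ℤ) - 1) -
                intChoose (m : ℤ) ((a : ℤ) - 1) : ℤ) : F) else 0) := by
        intro a _
        exact if_congr (by tauto) rfl rfl
      have e2 : ∀ a ∈ Finset.range (m + 2),
          (if a = 0 ∧ m + 1 = N - 1 then
            ((intChoose (m : ℤ) (((m + 1 - a : ℕ) : ℤ) - 1) -
                intChoose (m : ℤ) ((a : ℤ) - 1) : ℤ) : F) else 0)
          = (if a = 0 then
            ((intChoose (m : ℤ) (((m + 1 - a : ℕ) : ℤ) - 1) -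
                intChoose (m : ℤ) ((a : ℤ) - 1) : ℤ) : F) else 0) := by
        intro a _
        exact if_congr (by tauto) rfl rfl
      rw [Finset.sum_congr rfl e1, Finset.sum_congr rfl e2,
        Finset.sum_ite_eq' (Finset.range (m + 2)) (m + 1), Finset.sum_ite_eq' (Finset.range (m + 2)) 0,
        if_pos (Finset.mem_range.2 (by omega)), if_pos (Finset.mem_range.2 (by omega))]
      have v1 : ((intChoose (m : ℤ) (((m + 1 - (m + 1) : ℕ) : ℤ) - 1) -
          intChoose (m : ℤ) (((m + 1 : ℕ) : ℤ) - 1) : ℤ) : F) = -1 := by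
        have h1 : ((m + 1 - (m + 1) : ℕ) : ℤ) - 1 = -1 := by omega
        have h2 : ((m + 1 : ℕ) : ℤ) - 1 = (m : ℤ) := by push_cast; ring
        rw [h1, h2, intChoose_of_neg (show (-1:ℤ) < 0 by norm_num), intChoose_natCast m m le_rfl, Nat.choose_self]
        norm_num
      have v2 : ((intChoose (m : ℤ) (((m + 1 - 0 : ℕ) : ℤ) - 1) -
          intChoose (m : ℤ) (((0 : ℕ) : ℤ) - 1) : ℤ) : F) = 1 := by
        have h1 : ((m + 1 - 0 : ℕ) : ℤ) - 1 = (m : ℤ) := by omega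
        have h2 : (((0 : ℕ) : ℤ)) - 1 = -1 := by norm_num
        rw [h1, h2, intChoose_of_neg (show (-1:ℤ) < 0 by norm_num), intChoose_natCast m m le_rfl, Nat.choose_self]
        norm_num
      rw [v1, v2, if_neg (by omega : ¬ m = N - 1)]
      ring
    · have e1 : ∀ a ∈ Finset.range (m + 2),
          (if a = m + 1 ∧ m + 1 = N - 1 then
            ((intChoose (m : ℤ) (((m + 1 - a : ℕ) : ℤ) - 1) -
                intChoose (m : ℤ) ((a : ℤ) - 1) : ℤ) : F) else 0) = 0 := by
        intro a _
        rw [if_neg (by tauto)]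
      have e2 : ∀ a ∈ Finset.range (m + 2),
          (if a = 0 ∧ m + 1 = N - 1 then
            ((intChoose (m : ℤ) (((m + 1 - a : ℕ) : ℤ) - 1) -
                intChoose (m : ℤ) ((a : ℤ) - 1) : ℤ) : F) else 0) = 0 := by
        intro a _
        rw [if_neg (by tauto)]
      rw [Finset.sum_congr rfl e1, Finset.sum_congr rfl e2, Finset.sum_const_zero,
        if_neg (by omega : ¬ m = N - 1)]
      ring
  · -- Case B: m + 1 = N
    have hms : m + 1 = N := by omega
    have hmF : (m : F) = -1 := by
      have h := congrArg (Nat.cast : ℕ → F) hms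
      push_cast at h
      rw [hNF] at h
      linear_combination h
    have hch : m.choose (m - 1) = m := by
      calc m.choose (m - 1) = m.choose 1 := Nat.choose_symm (by omega)
        _ = m := Nat.choose_one_right m
    have hcond : ∀ a ∈ Finset.range (m + 2),
        (if a < N ∧ m + 1 - a < N then
          (α ^ a + if a = N - 1 then 1 else 0) *
              (β ^ (m + 1 - a) + if m + 1 - a = N - 1 then 1 else 0) *
            ((intChoose (m : ℤ) (((m + 1 - a : ℕ) : ℤ) - 1) -
                intChoose (m : ℤ) ((a : ℤ) - 1) : ℤ) : F)
        else 0)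
        = α ^ a * β ^ (m + 1 - a) *
            ((intChoose (m : ℤ) (((m + 1 - a : ℕ) : ℤ) - 1) -
                intChoose (m : ℤ) ((a : ℤ) - 1) : ℤ) : F)
          + (if a = N - 1 then β ^ (m + 1 - a) *
              ((intChoose (m : ℤ) (((m + 1 - a : ℕ) : ℤ) - 1) -
                intChoose (m : ℤ) ((a : ℤ) - 1) : ℤ) : F) else 0)
          + (if a = 1 then α ^ a *
              ((intChoose (m : ℤ) (((m + 1 - a : ℕ) : ℤ) - 1) -
                intChoose (m : ℤ) ((a : ℤ) - 1) : ℤ) : F)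
              + (if N - 1 = 1 then
                ((intChoose (m : ℤ) (((m + 1 - a : ℕ) : ℤ) - 1) -
                  intChoose (m : ℤ) ((a : ℤ) - 1) : ℤ) : F) else 0) else 0)
          + (if a = 0 then -(β ^ (m + 1 - a) *
              ((intChoose (m : ℤ) (((m + 1 - a : ℕ) : ℤ) - 1) -
                intChoose (m : ℤ) ((a : ℤ) - 1) : ℤ) : F)) else 0)
          + (if a = m + 1 then -(α ^ a *
              ((intChoose (m : ℤ) (((m + 1 - a : ℕ) : ℤ) - 1) -
                intChoose (m : ℤ) ((a : ℤ) - 1) : ℤ) : F)) else 0) := by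
      intro a ha
      have ha' : a ≤ m + 1 := by have := Finset.mem_range.1 ha; omega
      by_cases h0 : a = 0
      · subst h0
        rw [if_neg (by omega), if_neg (show ¬(0 : ℕ) = N - 1 by omega),
          if_neg (show ¬(0 : ℕ) = 1 by omega), if_pos rfl,
          if_neg (show ¬(0 : ℕ) = m + 1 by omega), pow_zero]
        ring
      · by_cases hm1 : a = m + 1
        · subst hm1
          rw [if_neg (by omega), if_neg (show ¬m + 1 = N - 1 by omega),
            if_neg (show ¬m + 1 = 1 by omega), if_neg (show ¬m + 1 = 0 by omega), if_pos rfl,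
            show m + 1 - (m + 1) = 0 by omega, pow_zero]
          ring
        · rw [if_pos ⟨by omega, by omega⟩]
          by_cases hx : a = N - 1 <;> by_cases hy : m + 1 - a = N - 1
          · have ha1 : a = 1 := by omega
            have hN2 : N - 1 = 1 := by omega
            rw [if_pos hx, if_pos hx, if_pos hy, if_pos ha1, if_pos hN2, if_neg h0, if_neg hm1]
            ring
          · rw [if_pos hx, if_pos hx, if_neg hy, if_neg (show ¬a = 1 by omega), if_neg h0,
              if_neg hm1]
            ring
          · have ha1 : a = 1 := by omega
            rw [if_neg hx, if_neg hx, if_pos hy, if_pos ha1, if_neg (show ¬N - 1 = 1 by omega),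
              if_neg h0, if_neg hm1]
            ring
          · rw [if_neg hx, if_neg hx, if_neg hy, if_neg (show ¬a = 1 by omega), if_neg h0,
              if_neg hm1]
            ring
    rw [Finset.sum_congr rfl hcond, Finset.sum_add_distrib, Finset.sum_add_distrib,
      Finset.sum_add_distrib, Finset.sum_add_distrib, key,
      Finset.sum_ite_eq' (Finset.range (m + 2)) (N - 1),
      Finset.sum_ite_eq' (Finset.range (m + 2)) 1,
      Finset.sum_ite_eq' (Finset.range (m + 2)) 0,
      Finset.sum_ite_eq' (Finset.range (m + 2)) (m + 1),
      if_pos (Finset.mem_range.2 (show N - 1 < m + 2 by omega)),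
      if_pos (Finset.mem_range.2 (show 1 < m + 2 by omega)),
      if_pos (Finset.mem_range.2 (show 0 < m + 2 by omega)),
      if_pos (Finset.mem_range.2 (show m + 1 < m + 2 by omega))]
    have vDN1 : ((intChoose (m : ℤ) (((m + 1 - (N - 1) : ℕ) : ℤ) - 1) -
        intChoose (m : ℤ) (((N - 1 : ℕ) : ℤ) - 1) : ℤ) : F) = 2 := by
      rw [show ((m + 1 - (N - 1) : ℕ) : ℤ) - 1 = ((0 : ℕ) : ℤ) by omega,
        show (((N - 1 : ℕ) : ℤ)) - 1 = ((m - 1 : ℕ) : ℤ) by omega,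
        intChoose_natCast m 0 (by omega), intChoose_natCast m (m - 1) (by omega),
        hch, Nat.choose_zero_right]
      push_cast
      rw [hmF]; ring
    have vD1 : ((intChoose (m : ℤ) (((m + 1 - 1 : ℕ) : ℤ) - 1) -
        intChoose (m : ℤ) (((1 : ℕ) : ℤ) - 1) : ℤ) : F) = -2 := by
      rw [show ((m + 1 - 1 : ℕ) : ℤ) - 1 = ((m - 1 : ℕ) : ℤ) by omega,
        show (((1 : ℕ) : ℤ)) - 1 = ((0 : ℕ) : ℤ) by omega,
        intChoose_natCast m (m - 1) (by omega), intChoose_natCast m 0 (by omega),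
        hch, Nat.choose_zero_right]
      push_cast
      rw [hmF]; ring
    have vD0 : ((intChoose (m : ℤ) (((m + 1 - 0 : ℕ) : ℤ) - 1) -
        intChoose (m : ℤ) (((0 : ℕ) : ℤ) - 1) : ℤ) : F) = 1 := by
      rw [show ((m + 1 - 0 : ℕ) : ℤ) - 1 = ((m : ℕ) : ℤ) by omega,
        show (((0 : ℕ) : ℤ)) - 1 = -1 by norm_num,
        intChoose_natCast m m le_rfl, Nat.choose_self,
        intChoose_of_neg (show (-1 : ℤ) < 0 by norm_num)]
      norm_num
    have vDm1 : ((intChoose (m : ℤ) (((m + 1 - (m + 1) : ℕ) : ℤ) - 1) -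
        intChoose (m : ℤ) (((m + 1 : ℕ) : ℤ) - 1) : ℤ) : F) = -1 := by
      rw [show ((m + 1 - (m + 1) : ℕ) : ℤ) - 1 = -1 by omega,
        show (((m + 1 : ℕ) : ℤ)) - 1 = ((m : ℕ) : ℤ) by omega,
        intChoose_natCast m m le_rfl, Nat.choose_self,
        intChoose_of_neg (show (-1 : ℤ) < 0 by norm_num)]
      norm_num
    rw [vDN1, vD1, vD0, vDm1,
      show m + 1 - (N - 1) = 1 by omega, pow_one,
      show m + 1 - 0 = N by omega, hβN,
      show α ^ (m + 1) = α ^ N by rw [hms], hαN,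
      if_pos (show m = N - 1 by omega)]
    by_cases hN2 : N - 1 = 1
    · rw [if_pos hN2]
      have hz : (2 : F) = 0 := by
        have h2 : ((N : ℕ) : F) = 2 := by rw [show N = 2 by omega]; norm_num
        rw [← h2]
        exact hNF
      linear_combination -hz
    · rw [if_neg hN2]
      ring
end

section
/- Assume n1 = 1 (so r = p) and that p is odd. For 0 ≤ j ≤ q−1 define f_j := Σ_{i=0}^{p−1} (1−j)^i·m(i,j) ∈ H, where the integer 1−j is interpreted in F and the i = 0 term is m(0,j) (convention (1−j)^0 = 1). Then for all 0 ≤ j, l ≤ q−1: [f_j, f_l] = (C(j+l−1,l) − C(j+l−1,j))·f_{j+l−1} if 0 ≤ j+l−1 ≤ q−1, and [f_j, f_l] = 0 otherwise. Consequently the span of {f_j : 0 ≤ j ≤ q−1} is a q-dimensional Lie subalgebra of H, and the linear map sending E_i to −f_{i+1} (for −1 ≤ i ≤ q−2) is an injective homomorphism of Lie algebras from the Zassenhaus algebra W(1;n2) (the F-vector space with basis E_{−1}, …, E_{q−2} and bracket [E_i, E_k] = (C(i+k+1,k) − C(i+k+1,i))·E_{i+k}, with E_s = 0 for s outside [−1,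 q−2]) into H. -/
open scoped BigOperators

/-- The structure constant `N(i,j,k,l)`. -/
def Ncoef (i j k l : ℤ) : ℤ :=
  intChoose (i + k - 1) i * intChoose (j + l - 1) (j - 1) -
    intChoose (i + k - 1) (i - 1) * intChoose (j + l - 1) j

variable (F : Type*) [Field F]

/-- The underlying space of `H(2;(n1,n2);Φ(1))`, with basis indexed by `Fin r × Fin q`. -/
abbrev Hsp (r q : ℕ) : Type _ := Fin r × Fin q → F

/-- The divided power monomial `x^(i) y^(j)`, read as `0` when out of range. -/
noncomputable def mm (r q : ℕ) (i j : ℤ) : Hsp F r q :=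
  if h : 0 ≤ i ∧ i < (r : ℤ) ∧ 0 ≤ j ∧ j < (q : ℤ) then
    Pi.single (⟨i.toNat, by omega⟩, ⟨j.toNat, by omega⟩) 1
  else 0

/-- The bracket on basis elements of `H(2;(n1,n2);Φ(1))`. -/
noncomputable def bB (r q : ℕ) (a b : Fin r × Fin q) : Hsp F r q :=
  if 0 < (a.1 : ℤ) + (b.1 : ℤ) then
    ((Ncoef (a.1 : ℤ) (a.2 : ℤ) (b.1 : ℤ) (b.2 : ℤ) : ℤ) : F) •
      mm F r q ((a.1 : ℤ) + (b.1 : ℤ) - 1) ((a.2 : ℤ) + (b.2 : ℤ) - 1)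
  else
    ((intChoose ((a.2 : ℤ) + (b.2 : ℤ) - 1) (b.2 : ℤ) -
        intChoose ((a.2 : ℤ) + (b.2 : ℤ) - 1) (a.2 : ℤ) : ℤ) : F) •
      mm F r q ((r : ℤ) - 1) ((a.2 : ℤ) + (b.2 : ℤ) - 1)

/-- The bilinear bracket of `H(2;(n1,n2);Φ(1))`, extending `bB` bilinearly. -/
noncomputable def br (r q : ℕ) (u v : Hsp F r q) : Hsp F r q :=
  ∑ a : Fin r × Fin q, ∑ b : Fin r × Fin q, (u a * v b) • bB F r q a b

/-- The element `f_j = Σ_{i=0}^{p-1} (1-j)^i·m(i,j)` of `H` (case `n1 = 1`). -/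
noncomputable def ff (p q : ℕ) (j : ℤ) : Hsp F p q :=
  ∑ i ∈ Finset.range p, (1 - (j : F)) ^ i • mm F p q (i : ℤ) j

lemma intChoose_natCast_s19 (t a : ℕ) : intChoose (t : ℤ) (a : ℤ) = (t.choose a : ℤ) := by
  unfold intChoose
  split
  · simp
  · next h =>
    have : t < a := by omega
    simp [Nat.choose_eq_zero_of_lt this]

lemma intChoose_symm (a b : ℤ) : intChoose a b = intChoose a (a - b) := by
  unfold intChoose
  by_cases h : 0 ≤ b ∧ b ≤ a
  · rw [if_pos h, if_pos (by omega)]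
    have h1 : (a - b).toNat = a.toNat - b.toNat := by omega
    rw [h1, Nat.choose_symm (by omega)]
  · rw [if_neg h, if_neg (by omega)]

lemma intChoose_mul (a b : ℤ) : b * intChoose a b = (a - b + 1) * intChoose a (b - 1) := by
  unfold intChoose
  by_cases h : 0 ≤ b ∧ b ≤ a
  · rcases eq_or_lt_of_le h.1 with h0 | h0
    · rw [if_pos h, if_neg (by omega)]
      simp [← h0]
    · rw [if_pos h, if_pos (by omega)]
      have h1 : (b - 1).toNat = b.toNat - 1 := by omega
      have h2 : b.toNat = (b.toNat - 1) + 1 := by omega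
      have := Nat.choose_succ_right_eq a.toNat (b.toNat - 1)
      rw [← h2] at this
      have key : (a.toNat.choose b.toNat : ℤ) * b = (a.toNat.choose (b.toNat - 1) : ℤ) * (a - b + 1) := by
        have hb : (b.toNat : ℤ) = b := by omega
        have hab : ((a.toNat - (b.toNat - 1) : ℕ) : ℤ) = a - b + 1 := by omega
        calc (a.toNat.choose b.toNat : ℤ) * b = ((a.toNat.choose b.toNat * b.toNat : ℕ) : ℤ) := by push_cast [hb]; ring
          _ = ((a.toNat.choose (b.toNat - 1) * (a.toNat - (b.toNat - 1)) : ℕ) : ℤ) := by rw [this]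
          _ = (a.toNat.choose (b.toNat - 1) : ℤ) * (a - b + 1) := by push_cast [hab]; ring
      rw [h1]; linarith [key]
  · by_cases h' : 0 ≤ b - 1 ∧ b - 1 ≤ a
    · rw [if_neg h, if_pos h']
      have : b - 1 = a := by omega
      rw [this]; rw [show a - b + 1 = 0 by omega]; ring
    · rw [if_neg h, if_neg h']
      ring

section sums
variable {K : Type*} [CommRing K]

lemma sumL (u v : K) (t : ℕ) :
    ∑ a ∈ Finset.range (t+2), (t.choose a : K) * u^a * v^(t+1-a) = v * (u+v)^t := by
  rw [Finset.sum_range_succ]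
  simp only [Nat.choose_succ_self, Nat.cast_zero, zero_mul, add_zero]
  rw [add_pow, Finset.mul_sum]
  apply Finset.sum_congr rfl
  intro a ha
  have h : t + 1 - a = (t - a) + 1 := by
    have := Finset.mem_range.1 ha; omega
  rw [h, pow_succ]
  ring

lemma sumR (u v : K) (t : ℕ) :
    ∑ a ∈ Finset.range (t+2), (t.choose (t+1-a) : K) * u^a * v^(t+1-a) = u * (u+v)^t := by
  rw [← Finset.sum_range_reflect]
  have : ∀ a ∈ Finset.range (t+2),
      (t.choose (t+1-(t+2-1-a)) : K) * u^(t+2-1-a) * v^(t+1-(t+2-1-a))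
        = (t.choose a : K) * v^a * u^(t+1-a) := by
    intro a ha
    have h1 : t+1-(t+2-1-a) = a := by have := Finset.mem_range.1 ha; omega
    have h2 : t+2-1-a = t+1-a := by omega
    rw [h1, h2]; ring
  rw [Finset.sum_congr rfl this, sumL, add_comm]
end sums

section key
variable {K : Type*} [CommRing K]

lemma inner_collapse (p t : ℕ) (g : ℕ → ℕ → K) (a : ℕ) :
    ∑ b ∈ Finset.range p, (if a + b = t + 1 then g a b else 0)
      = if a ≤ t + 1 ∧ t + 1 - a < p then g a (t+1-a) else 0 := by
  by_cases ha : a ≤ t + 1 ∧ t + 1 - a < p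
  · rw [if_pos ha, Finset.sum_eq_single (t+1-a)]
    · rw [if_pos (by omega)]
    · intro b _ hb
      rw [if_neg (by omega)]
    · intro h
      exact absurd (Finset.mem_range.2 ha.2) h
  · rw [if_neg ha]
    apply Finset.sum_eq_zero
    intro b hb
    have := Finset.mem_range.1 hb
    rw [if_neg (by omega)]

lemma full_sum (u v A B : K) (t : ℕ) :
    ∑ a ∈ Finset.range (t+2),
      u^a * v^(t+1-a) * ((t.choose a : K) * A - (t.choose (t+1-a) : K) * B)
      = (v * A - u * B) * (u+v)^t := by
  have : ∀ a ∈ Finset.range (t+2),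
      u^a * v^(t+1-a) * ((t.choose a : K) * A - (t.choose (t+1-a) : K) * B)
        = ((t.choose a : K) * u^a * v^(t+1-a)) * A
          - ((t.choose (t+1-a) : K) * u^a * v^(t+1-a)) * B := by
    intro a _; ring
  rw [Finset.sum_congr rfl this, Finset.sum_sub_distrib, ← Finset.sum_mul, ← Finset.sum_mul,
    sumL, sumR]
  ring

/-- The key summation identity. -/
lemma keySum (p t : ℕ) (hp0 : 0 < p) (ht : t < p) (u v A B C : K)
    (hu : u^p = u) (hv : v^p = v) (hC : v * A - u * B = C) :
    (∑ a ∈ Finset.range p, ∑ b ∈ Finset.range p,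
      (if a + b = t + 1 then
        u^a * v^b * ((t.choose a : K) * A - (t.choose b : K) * B) else 0))
      + (if t = p - 1 then C else 0) = C * (u+v)^t := by
  set g : ℕ → ℕ → K := fun a b => u^a * v^b * ((t.choose a : K) * A - (t.choose b : K) * B)
    with hg
  have hgr : ∀ a, a ≤ t + 1 → g a (t+1-a)
      = u^a * v^(t+1-a) * ((t.choose a : K) * A - (t.choose (t+1-a) : K) * B) := by
    intro a _; rfl
  rw [Finset.sum_congr rfl (fun a _ => inner_collapse p t g a)]
  by_cases hcase : t + 1 < p
  · -- easy case
    rw [if_neg (by omega)]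
    have h1 : ∑ a ∈ Finset.range p, (if a ≤ t + 1 ∧ t + 1 - a < p then g a (t+1-a) else 0)
        = ∑ a ∈ Finset.range (t+2), g a (t+1-a) := by
      rw [← Finset.sum_subset (Finset.range_subset_range.2 (by omega : t+2 ≤ p))]
      · apply Finset.sum_congr rfl
        intro a ha
        have := Finset.mem_range.1 ha
        rw [if_pos (by omega)]
      · intro a _ ha
        rw [if_neg (by rw [Finset.mem_range] at ha; omega)]
    rw [h1, add_zero, Finset.sum_congr rfl (fun a ha => hgr a (by have := Finset.mem_range.1 ha; omega)),
      full_sum, hC]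
  · -- t = p - 1
    have htp : t + 1 = p := by omega
    have h1 : ∑ a ∈ Finset.range p, (if a ≤ t + 1 ∧ t + 1 - a < p then g a (t+1-a) else 0)
        = ∑ a ∈ Finset.range p, (g a (t+1-a) - (if a = 0 then g a (t+1-a) else 0)) := by
      apply Finset.sum_congr rfl
      intro a ha
      have := Finset.mem_range.1 ha
      by_cases h0 : a = 0
      · rw [if_neg (by omega), if_pos h0]; ring
      · rw [if_pos (by omega), if_neg h0]; ring
    rw [h1, Finset.sum_sub_distrib, Finset.sum_ite_eq' (Finset.range p) 0,
      if_pos (Finset.mem_range.2 hp0)]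
    have h2 : ∑ a ∈ Finset.range p, g a (t+1-a)
        = (∑ a ∈ Finset.range (t+2), g a (t+1-a)) - g (t+1) 0 := by
      rw [show t + 2 = p + 1 by omega, Finset.sum_range_succ, htp, Nat.sub_self]
      ring
    have h3 : ∑ a ∈ Finset.range (t+2), g a (t+1-a) = (v * A - u * B) * (u+v)^t := by
      rw [Finset.sum_congr rfl (fun a ha => hgr a (by have := Finset.mem_range.1 ha; omega)),
        full_sum]
    have hg0 : g 0 (t+1-0) = v * A := by
      rw [hg]
      simp only [pow_zero, one_mul, Nat.sub_zero, Nat.choose_zero_right, Nat.cast_one]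
      rw [htp, Nat.choose_eq_zero_of_lt (by omega), hv]
      push_cast; ring
    have hgp : g (t+1) 0 = -(u * B) := by
      rw [hg]
      simp only [pow_zero, Nat.choose_zero_right, Nat.cast_one]
      rw [Nat.choose_eq_zero_of_lt (by omega), htp, hu]
      push_cast; ring
    rw [h2, h3, hg0, hgp, if_pos (by omega), ← hC]
    ring
end key


section apply_lemmas
variable {K : Type*} [Field K]

lemma mm_apply (r q : ℕ) (i j : ℤ) (c : Fin r × Fin q) :
    mm K r q i j c = if ((c.1 : ℤ) = i ∧ (c.2 : ℤ) = j) then 1 else 0 := by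
  unfold mm
  split
  · next h =>
    rw [Pi.single_apply]
    congr 1
    rw [Prod.ext_iff]
    simp only [Fin.ext_iff]
    rw [eq_iff_iff]
    omega
  · next h =>
    have h1 := c.1.isLt
    have h2 := c.2.isLt
    rw [if_neg (by omega), Pi.zero_apply]

lemma mm_eq_zero (r q : ℕ) (i j : ℤ) (h : ¬ (0 ≤ j ∧ j < (q:ℤ))) : mm K r q i j = 0 := by
  unfold mm
  rw [dif_neg (by omega)]

lemma ff_apply (p q : ℕ) (j : ℤ) (c : Fin p × Fin q) :
    ff K p q j c = if (c.2 : ℤ) = j then (1 - (j : K)) ^ (c.1 : ℕ) else 0 := by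
  unfold ff
  rw [Finset.sum_apply]
  simp only [Pi.smul_apply, mm_apply, smul_eq_mul, mul_ite, mul_one, mul_zero]
  rw [Finset.sum_eq_single (c.1 : ℕ)]
  · by_cases h : (c.2 : ℤ) = j
    · rw [if_pos ⟨by simp, h⟩, if_pos h]
    · rw [if_neg (by tauto), if_neg h]
  · intro i _ hne
    rw [if_neg (by rintro ⟨h1, -⟩; exact hne (by exact_mod_cast h1.symm))]
  · intro h
    exact absurd (Finset.mem_range.2 c.1.isLt) h

lemma ff_eq_zero (p q : ℕ) (j : ℤ) (h : ¬ (0 ≤ j ∧ j < (q:ℤ))) : ff K p q j = 0 := by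
  unfold ff
  apply Finset.sum_eq_zero
  intro i _
  rw [mm_eq_zero _ _ _ _ h, smul_zero]

lemma intCast_pow_char (p : ℕ) [Fact p.Prime] [CharP K p] (x : ℤ) : ((x : K)) ^ p = x := by
  have h := map_intCast (frobenius K p) x
  rwa [frobenius_def] at h
end apply_lemmas

section coef_lemmas

lemma scalarC (j l : ℤ) :
    (1 - l) * intChoose (j + l - 1) (j - 1) - (1 - j) * intChoose (j + l - 1) j
      = intChoose (j + l - 1) l - intChoose (j + l - 1) j := by
  have hA : intChoose (j + l - 1) (j - 1) = intChoose (j + l - 1) l := by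
    rw [intChoose_symm (j + l - 1) (j - 1), show j + l - 1 - (j - 1) = l by ring]
  have h2 : l * intChoose (j + l - 1) l = j * intChoose (j + l - 1) (l - 1) := by
    rw [intChoose_mul (j + l - 1) l, show j + l - 1 - l + 1 = j by ring]
  have h3 : intChoose (j + l - 1) (l - 1) = intChoose (j + l - 1) j := by
    rw [intChoose_symm (j + l - 1) (l - 1), show j + l - 1 - (l - 1) = j by ring]
  rw [hA]
  rw [h3] at h2
  linear_combination -h2

lemma Ncoef_eq (t a b : ℕ) (j l : ℤ) (hab : a + b = t + 1) :
    Ncoef (a : ℤ) j (b : ℤ) l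
      = (t.choose a : ℤ) * intChoose (j + l - 1) (j - 1)
        - (t.choose b : ℤ) * intChoose (j + l - 1) j := by
  unfold Ncoef
  rw [show (a : ℤ) + (b : ℤ) - 1 = (t : ℤ) by omega]
  rw [intChoose_symm (t : ℤ) ((a : ℤ) - 1), show (t : ℤ) - ((a : ℤ) - 1) = (b : ℤ) by omega]
  rw [intChoose_natCast_s19, intChoose_natCast_s19]

lemma symmW (a b : ℤ) :
    intChoose (a + b - 1) (a - 1) = intChoose (a + b - 1) b := by
  rw [intChoose_symm (a + b - 1) (a - 1), show a + b - 1 - (a - 1) = b by ring]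

end coef_lemmas

section br_lemmas
variable {K : Type*} [Field K]

lemma br_sum_left (r q : ℕ) {ι : Type*} (s : Finset ι) (f : ι → Hsp K r q) (w : Hsp K r q) :
    br K r q (∑ i ∈ s, f i) w = ∑ i ∈ s, br K r q (f i) w := by
  unfold br
  calc (∑ a : Fin r × Fin q, ∑ b : Fin r × Fin q, ((∑ i ∈ s, f i) a * w b) • bB K r q a b)
      = ∑ a : Fin r × Fin q, ∑ b : Fin r × Fin q, ∑ i ∈ s, (f i a * w b) • bB K r q a b := by
        apply Finset.sum_congr rfl; intro a _
        apply Finset.sum_congr rfl; intro b _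
        rw [Finset.sum_apply, Finset.sum_mul, Finset.sum_smul]
    _ = ∑ a : Fin r × Fin q, ∑ i ∈ s, ∑ b : Fin r × Fin q, (f i a * w b) • bB K r q a b := by
        apply Finset.sum_congr rfl; intro a _
        exact Finset.sum_comm
    _ = ∑ i ∈ s, ∑ a : Fin r × Fin q, ∑ b : Fin r × Fin q, (f i a * w b) • bB K r q a b :=
        Finset.sum_comm

lemma br_sum_right (r q : ℕ) {ι : Type*} (s : Finset ι) (f : ι → Hsp K r q) (w : Hsp K r q) :
    br K r q w (∑ i ∈ s, f i) = ∑ i ∈ s, br K r q w (f i) := by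
  unfold br
  calc (∑ a : Fin r × Fin q, ∑ b : Fin r × Fin q, (w a * (∑ i ∈ s, f i) b) • bB K r q a b)
      = ∑ a : Fin r × Fin q, ∑ b : Fin r × Fin q, ∑ i ∈ s, (w a * f i b) • bB K r q a b := by
        apply Finset.sum_congr rfl; intro a _
        apply Finset.sum_congr rfl; intro b _
        rw [Finset.sum_apply, Finset.mul_sum, Finset.sum_smul]
    _ = ∑ a : Fin r × Fin q, ∑ i ∈ s, ∑ b : Fin r × Fin q, (w a * f i b) • bB K r q a b := by
        apply Finset.sum_congr rfl; intro a _
        exact Finset.sum_comm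
    _ = ∑ i ∈ s, ∑ a : Fin r × Fin q, ∑ b : Fin r × Fin q, (w a * f i b) • bB K r q a b :=
        Finset.sum_comm

lemma br_smul_left (r q : ℕ) (x : K) (u w : Hsp K r q) :
    br K r q (x • u) w = x • br K r q u w := by
  unfold br
  rw [Finset.smul_sum]
  apply Finset.sum_congr rfl
  intro a _
  rw [Finset.smul_sum]
  apply Finset.sum_congr rfl
  intro b _
  rw [Pi.smul_apply, smul_eq_mul, smul_smul, mul_assoc]

lemma br_smul_right (r q : ℕ) (x : K) (u w : Hsp K r q) :
    br K r q u (x • w) = x • br K r q u w := by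
  unfold br
  rw [Finset.smul_sum]
  apply Finset.sum_congr rfl
  intro a _
  rw [Finset.smul_sum]
  apply Finset.sum_congr rfl
  intro b _
  rw [Pi.smul_apply, smul_eq_mul, smul_smul]
  ring_nf

lemma br_neg_left (r q : ℕ) (u w : Hsp K r q) : br K r q (-u) w = - br K r q u w := by
  have := br_smul_left r q (-1 : K) u w
  simpa using this

lemma br_neg_right (r q : ℕ) (u w : Hsp K r q) : br K r q u (-w) = - br K r q u w := by
  have := br_smul_right r q (-1 : K) u w
  simpa using this

end br_lemmas

lemma br_ff (p : ℕ) (hp : p.Prime) {K : Type*} [Field K] [CharP K p] (q : ℕ)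
    (j l : ℤ) (hj0 : 0 ≤ j) (hj1 : j < (q : ℤ)) (hl0 : 0 ≤ l) (hl1 : l < (q : ℤ)) :
    br K p q (ff K p q j) (ff K p q l) =
      ((intChoose (j + l - 1) l - intChoose (j + l - 1) j : ℤ) : K) • ff K p q (j + l - 1) := by
  have hFact : Fact p.Prime := ⟨hp⟩
  have hp0 : 0 < p := hp.pos
  set j₀ : Fin q := ⟨j.toNat, by omega⟩ with hj₀
  set l₀ : Fin q := ⟨l.toNat, by omega⟩ with hl₀
  have hjc : ((j₀ : ℕ) : ℤ) = j := by show ((j.toNat : ℕ) : ℤ) = j; omega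
  have hlc : ((l₀ : ℕ) : ℤ) = l := by show ((l.toNat : ℕ) : ℤ) = l; omega
  have hjc' : ∀ a2 : Fin q, ((a2 : ℕ) : ℤ) = j → a2 = j₀ := by
    intro a2 h; exact Fin.ext (by show (a2 : ℕ) = j.toNat; omega)
  have hlc' : ∀ b2 : Fin q, ((b2 : ℕ) : ℤ) = l → b2 = l₀ := by
    intro b2 h; exact Fin.ext (by show (b2 : ℕ) = l.toNat; omega)
  set u : K := 1 - (j : K) with hud
  set v : K := 1 - (l : K) with hvd
  set Af : K := ((intChoose (j + l - 1) (j - 1) : ℤ) : K) with hAf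
  set Bf : K := ((intChoose (j + l - 1) j : ℤ) : K) with hBf
  set Cf : K := ((intChoose (j + l - 1) l - intChoose (j + l - 1) j : ℤ) : K) with hCf
  have hu : u ^ p = u := by
    rw [hud, show (1 : K) - (j : K) = ((1 - j : ℤ) : K) by push_cast; ring, intCast_pow_char]
  have hv : v ^ p = v := by
    rw [hvd, show (1 : K) - (l : K) = ((1 - l : ℤ) : K) by push_cast; ring, intCast_pow_char]
  have hC : v * Af - u * Bf = Cf := by
    rw [hud, hvd, hAf, hBf, hCf, ← scalarC j l]
    push_cast
    ring
  funext c
  obtain ⟨c1, c2⟩ := c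
  have ht : (c1 : ℕ) < p := c1.isLt
  -- value of bB on the relevant basis elements
  have hval : ∀ a1 b1 : Fin p,
      bB K p q (a1, j₀) (b1, l₀) (c1, c2) =
        if 0 < ((a1 : ℕ) : ℤ) + ((b1 : ℕ) : ℤ) then
          ((Ncoef ((a1 : ℕ) : ℤ) j ((b1 : ℕ) : ℤ) l : ℤ) : K) *
            (if (((c1 : ℕ) : ℤ) = ((a1 : ℕ) : ℤ) + ((b1 : ℕ) : ℤ) - 1 ∧
                ((c2 : ℕ) : ℤ) = j + l - 1) then 1 else 0)
        else Cf * (if (((c1 : ℕ) : ℤ) = (p : ℤ) - 1 ∧ ((c2 : ℕ) : ℤ) = j + l - 1)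
          then 1 else 0) := by
    intro a1 b1
    unfold bB
    dsimp only
    rw [hjc, hlc]
    split
    · rw [Pi.smul_apply, smul_eq_mul, mm_apply]
    · rw [Pi.smul_apply, smul_eq_mul, mm_apply, hCf]
  -- reduce the bracket to a double sum over `Fin p`
  have e2 : br K p q (ff K p q j) (ff K p q l) (c1, c2)
      = ∑ a1 : Fin p, u ^ (a1 : ℕ) *
          ∑ b1 : Fin p, v ^ (b1 : ℕ) * bB K p q (a1, j₀) (b1, l₀) (c1, c2) := by
    unfold br
    rw [Finset.sum_apply, Fintype.sum_prod_type]
    apply Finset.sum_congr rfl; intro a1 _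
    rw [Finset.sum_eq_single j₀]
    · rw [Finset.sum_apply, Fintype.sum_prod_type, Finset.mul_sum]
      apply Finset.sum_congr rfl; intro b1 _
      rw [Finset.sum_eq_single l₀]
      · rw [Pi.smul_apply, smul_eq_mul, ff_apply p q j (a1, j₀), ff_apply p q l (b1, l₀)]
        dsimp only
        rw [if_pos hjc, if_pos hlc]
        ring
      · intro b2 _ hb2
        rw [Pi.smul_apply, smul_eq_mul, ff_apply p q l (b1, b2)]
        dsimp only
        rw [if_neg (fun h => hb2 (hlc' b2 h)), mul_zero, zero_mul]
      · intro h; exact absurd (Finset.mem_univ l₀) h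
    · intro a2 _ ha2
      rw [Finset.sum_apply]
      apply Finset.sum_eq_zero
      intro b _
      rw [Pi.smul_apply, smul_eq_mul, ff_apply p q j (a1, a2)]
      dsimp only
      rw [if_neg (fun h => ha2 (hjc' a2 h)), zero_mul, zero_mul]
    · intro h; exact absurd (Finset.mem_univ j₀) h
  rw [e2, Pi.smul_apply, smul_eq_mul, ff_apply p q (j + l - 1) (c1, c2)]
  dsimp only
  by_cases h2 : ((c2 : ℕ) : ℤ) = j + l - 1
  · -- main case: the second coordinate matches
    rw [if_pos h2]
    have hpow : (1 : K) - ((j + l - 1 : ℤ) : K) = u + v := by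
      rw [hud, hvd]; push_cast; ring
    rw [hpow]
    set G : ℕ → ℕ → K := fun a b =>
      if a + b = (c1 : ℕ) + 1 then
        u ^ a * v ^ b * (((c1 : ℕ).choose a : K) * Af - (((c1 : ℕ)).choose b : K) * Bf)
      else 0 with hG
    set Y : K := if (c1 : ℕ) = p - 1 then Cf else 0 with hY
    set G2 : ℕ → ℕ → K := fun a b => if a = 0 then (if b = 0 then Y else 0) else 0 with hG2
    have e4 : ∀ a1 b1 : Fin p,
        u ^ (a1 : ℕ) * (v ^ (b1 : ℕ) * bB K p q (a1, j₀) (b1, l₀) (c1, c2))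
          = G (a1 : ℕ) (b1 : ℕ) + G2 (a1 : ℕ) (b1 : ℕ) := by
      intro a1 b1
      rw [hval, hG, hG2, hY]
      dsimp only
      split_ifs
      all_goals try (exfalso; omega)
      all_goals try ring
      all_goals try (rw [show (a1 : ℕ) = 0 by omega, show (b1 : ℕ) = 0 by omega,
        pow_zero, pow_zero]; ring)
      all_goals rw [Ncoef_eq (c1 : ℕ) (a1 : ℕ) (b1 : ℕ) j l (by omega)]
      all_goals rw [hAf, hBf]
      all_goals push_cast
      all_goals ring
    calc ∑ a1 : Fin p, u ^ (a1 : ℕ) *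
            ∑ b1 : Fin p, v ^ (b1 : ℕ) * bB K p q (a1, j₀) (b1, l₀) (c1, c2)
        = ∑ a1 : Fin p, ∑ b1 : Fin p, (G (a1 : ℕ) (b1 : ℕ) + G2 (a1 : ℕ) (b1 : ℕ)) := by
          apply Finset.sum_congr rfl; intro a1 _
          rw [Finset.mul_sum]
          exact Finset.sum_congr rfl (fun b1 _ => e4 a1 b1)
      _ = (∑ a1 : Fin p, ∑ b1 : Fin p, G (a1 : ℕ) (b1 : ℕ))
            + ∑ a1 : Fin p, ∑ b1 : Fin p, G2 (a1 : ℕ) (b1 : ℕ) := by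
          rw [← Finset.sum_add_distrib]
          exact Finset.sum_congr rfl (fun a1 _ => Finset.sum_add_distrib)
      _ = (∑ a ∈ Finset.range p, ∑ b ∈ Finset.range p, G a b)
            + ∑ a ∈ Finset.range p, ∑ b ∈ Finset.range p, G2 a b := by
          congr 1
          · rw [Fin.sum_univ_eq_sum_range (fun a => ∑ b1 : Fin p, G a (b1 : ℕ)) p]
            exact Finset.sum_congr rfl (fun a _ => Fin.sum_univ_eq_sum_range (G a) p)
          · rw [Fin.sum_univ_eq_sum_range (fun a => ∑ b1 : Fin p, G2 a (b1 : ℕ)) p]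
            exact Finset.sum_congr rfl (fun a _ => Fin.sum_univ_eq_sum_range (G2 a) p)
      _ = (∑ a ∈ Finset.range p, ∑ b ∈ Finset.range p, G a b) + Y := by
          congr 1
          have h1 : ∀ a ∈ Finset.range p, ∑ b ∈ Finset.range p, G2 a b
              = if a = 0 then Y else 0 := by
            intro a _
            rw [hG2]
            by_cases ha : a = 0
            · subst ha
              simp only [reduceIte]
              rw [Finset.sum_ite_eq' (Finset.range p) 0 (fun _ => Y),
                if_pos (Finset.mem_range.2 hp0)]
            · simp only [if_neg ha, Finset.sum_const_zero]
          rw [Finset.sum_congr rfl h1, Finset.sum_ite_eq' (Finset.range p) 0 (fun _ => Y),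
            if_pos (Finset.mem_range.2 hp0)]
      _ = Cf * (u + v) ^ (c1 : ℕ) := by
          rw [hY, hG]
          exact keySum p (c1 : ℕ) hp0 ht u v Af Bf Cf hu hv hC
  · -- the second coordinate does not match: both sides vanish
    rw [if_neg h2, mul_zero]
    apply Finset.sum_eq_zero
    intro a1 _
    have hz : ∑ b1 : Fin p, v ^ (b1 : ℕ) * bB K p q (a1, j₀) (b1, l₀) (c1, c2) = 0 := by
      apply Finset.sum_eq_zero
      intro b1 _
      rw [hval]
      by_cases hpos : (0 : ℤ) < ((a1 : ℕ) : ℤ) + ((b1 : ℕ) : ℤ)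
      · rw [if_pos hpos, if_neg (fun h => h2 h.2), mul_zero, mul_zero]
      · rw [if_neg hpos, if_neg (fun h => h2 h.2), mul_zero, mul_zero]
    rw [hz, mul_zero]

section more_br
variable {K : Type*} [Field K]

lemma br_zero_left (r q : ℕ) (w : Hsp K r q) : br K r q 0 w = 0 := by
  unfold br
  apply Finset.sum_eq_zero; intro a _
  apply Finset.sum_eq_zero; intro b _
  rw [Pi.zero_apply, zero_mul, zero_smul]

lemma br_zero_right (r q : ℕ) (w : Hsp K r q) : br K r q w 0 = 0 := by
  unfold br
  apply Finset.sum_eq_zero; intro a _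
  apply Finset.sum_eq_zero; intro b _
  rw [Pi.zero_apply, mul_zero, zero_smul]

lemma br_add_left (r q : ℕ) (u1 u2 w : Hsp K r q) :
    br K r q (u1 + u2) w = br K r q u1 w + br K r q u2 w := by
  unfold br
  rw [← Finset.sum_add_distrib]
  apply Finset.sum_congr rfl; intro a _
  rw [← Finset.sum_add_distrib]
  apply Finset.sum_congr rfl; intro b _
  rw [Pi.add_apply, add_mul, add_smul]

lemma br_add_right (r q : ℕ) (u1 u2 w : Hsp K r q) :
    br K r q w (u1 + u2) = br K r q w u1 + br K r q w u2 := by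
  unfold br
  rw [← Finset.sum_add_distrib]
  apply Finset.sum_congr rfl; intro a _
  rw [← Finset.sum_add_distrib]
  apply Finset.sum_congr rfl; intro b _
  rw [Pi.add_apply, mul_add, add_smul]

end more_br

/-- The linear map `W(1;n2) → H` underlying the embedding of the Zassenhaus algebra. -/
noncomputable def phiMap (K : Type*) [Field K] (p q : ℕ) : Wsp K q →ₗ[K] Hsp K p q where
  toFun w := -∑ b : Fin q, w b • ff K p q (b : ℤ)
  map_add' w1 w2 := by
    simp only [Pi.add_apply, add_smul, Finset.sum_add_distrib, neg_add]
  map_smul' c w := by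
    simp only [Pi.smul_apply, smul_eq_mul, mul_smul, ← Finset.smul_sum, RingHom.id_apply,
      smul_neg]

lemma phiMap_apply (K : Type*) [Field K] (p q : ℕ) (w : Wsp K q) :
    phiMap K p q w = -∑ b : Fin q, w b • ff K p q (b : ℤ) := rfl

lemma phiMap_single (K : Type*) [Field K] (p q : ℕ) (b : Fin q) :
    phiMap K p q (Pi.single b 1) = -(ff K p q (b : ℤ)) := by
  rw [phiMap_apply, Finset.sum_eq_single b]
  · rw [Pi.single_eq_same, one_smul]
  · intro b' _ hb'
    rw [Pi.single_eq_of_ne hb', zero_smul]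
  · intro h; exact absurd (Finset.mem_univ b) h

lemma coefW (a b : ℤ) :
    -(intChoose (a - 1 + (b - 1) + 1) (b - 1) - intChoose (a - 1 + (b - 1) + 1) (a - 1))
      = intChoose (a + b - 1) b - intChoose (a + b - 1) a := by
  have e : a - 1 + (b - 1) + 1 = a + b - 1 := by ring
  rw [e, intChoose_symm (a + b - 1) (b - 1), show a + b - 1 - (b - 1) = a by ring,
    intChoose_symm (a + b - 1) (a - 1), show a + b - 1 - (a - 1) = b by ring]
  ring


theorem stmt19 (p : ℕ) (hp : p.Prime) (hodd : p ≠ 2) (F : Type*) [Field F] [CharP F p]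
    (n2 : ℕ) (hn2 : 0 < n2) :
    -- the multiplication rule for the `f_j`
    (∀ j l : ℤ, 0 ≤ j → j ≤ (p ^ n2 : ℤ) - 1 → 0 ≤ l → l ≤ (p ^ n2 : ℤ) - 1 →
      (0 ≤ j + l - 1 → j + l - 1 ≤ (p ^ n2 : ℤ) - 1 →
        br F p (p ^ n2) (ff F p (p ^ n2) j) (ff F p (p ^ n2) l) =
          ((intChoose (j + l - 1) l - intChoose (j + l - 1) j : ℤ) : F) •
            ff F p (p ^ n2) (j + l - 1)) ∧
      (j + l - 1 < 0 ∨ (p ^ n2 : ℤ) - 1 < j + l - 1 →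
        br F p (p ^ n2) (ff F p (p ^ n2) j) (ff F p (p ^ n2) l) = 0)) ∧
    -- the span of the `f_j` is a `q`-dimensional subalgebra
    (∀ u ∈ Submodule.span F
        {x | ∃ j : ℤ, 0 ≤ j ∧ j ≤ (p ^ n2 : ℤ) - 1 ∧ x = ff F p (p ^ n2) j},
      ∀ v ∈ Submodule.span F
        {x | ∃ j : ℤ, 0 ≤ j ∧ j ≤ (p ^ n2 : ℤ) - 1 ∧ x = ff F p (p ^ n2) j},
      br F p (p ^ n2) u v ∈ Submodule.span F
        {x | ∃ j : ℤ, 0 ≤ j ∧ j ≤ (p ^ n2 : ℤ) - 1 ∧ x = ff F p (p ^ n2) j}) ∧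
    Module.finrank F
      (Submodule.span F
        {x | ∃ j : ℤ, 0 ≤ j ∧ j ≤ (p ^ n2 : ℤ) - 1 ∧ x = ff F p (p ^ n2) j}) = p ^ n2 ∧
    -- `E_i ↦ -f_{i+1}` is an injective homomorphism of Lie algebras `W(1;n2) → H`
    (∃ φ : Wsp F (p ^ n2) →ₗ[F] Hsp F p (p ^ n2),
      (∀ i : ℤ, -1 ≤ i → i ≤ (p ^ n2 : ℤ) - 2 →
        φ (EE F (p ^ n2) i) = -(ff F p (p ^ n2) (i + 1))) ∧
      Function.Injective φ ∧
      (∀ u v : Wsp F (p ^ n2),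
        φ (brW F (p ^ n2) u v) = br F p (p ^ n2) (φ u) (φ v))) := by
  have hp0 : 0 < p := hp.pos
  set q : ℕ := p ^ n2 with hqdef
  have hq : ((q : ℕ) : ℤ) = (p : ℤ) ^ n2 := by rw [hqdef]; push_cast; ring
  have hq0 : 0 < q := pow_pos hp0 n2
  set S : Set (Hsp F p q) :=
    {x | ∃ j : ℤ, 0 ≤ j ∧ j ≤ (p ^ n2 : ℤ) - 1 ∧ x = ff F p q j} with hS
  -- part 1
  have part1 : ∀ j l : ℤ, 0 ≤ j → j ≤ (p ^ n2 : ℤ) - 1 → 0 ≤ l → l ≤ (p ^ n2 : ℤ) - 1 →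
      (0 ≤ j + l - 1 → j + l - 1 ≤ (p ^ n2 : ℤ) - 1 →
        br F p q (ff F p q j) (ff F p q l) =
          ((intChoose (j + l - 1) l - intChoose (j + l - 1) j : ℤ) : F) •
            ff F p q (j + l - 1)) ∧
      (j + l - 1 < 0 ∨ (p ^ n2 : ℤ) - 1 < j + l - 1 →
        br F p q (ff F p q j) (ff F p q l) = 0) := by
    intro j l hj0 hj1 hl0 hl1
    have hbr := br_ff p hp (K := F) q j l hj0 (by omega) hl0 (by omega)
    constructor
    · intro _ _; exact hbr
    · intro hout
      rw [hbr, ff_eq_zero p q (j + l - 1) (by omega), smul_zero]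
  -- part 2
  have hgen : ∀ x ∈ S, ∀ y ∈ S, br F p q x y ∈ Submodule.span F S := by
    rintro x ⟨j, hj0, hj1, rfl⟩ y ⟨l, hl0, hl1, rfl⟩
    rw [br_ff p hp (K := F) q j l hj0 (by omega) hl0 (by omega)]
    by_cases h : 0 ≤ j + l - 1 ∧ j + l - 1 < (q : ℤ)
    · exact Submodule.smul_mem _ _
        (Submodule.subset_span ⟨j + l - 1, h.1, by omega, rfl⟩)
    · rw [ff_eq_zero p q (j + l - 1) h, smul_zero]
      exact Submodule.zero_mem _
  have part2 : ∀ u ∈ Submodule.span F S, ∀ v ∈ Submodule.span F S,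
      br F p q u v ∈ Submodule.span F S := by
    have h1 : ∀ x ∈ S, ∀ v ∈ Submodule.span F S, br F p q x v ∈ Submodule.span F S := by
      intro x hx v hv
      induction hv using Submodule.span_induction with
      | mem y hy => exact hgen x hx y hy
      | zero => rw [br_zero_right]; exact Submodule.zero_mem _
      | add y z _ _ hy hz => rw [br_add_right]; exact add_mem hy hz
      | smul c y _ hy => rw [br_smul_right]; exact Submodule.smul_mem _ _ hy
    intro u hu v hv
    induction hu using Submodule.span_induction with
    | mem x hx => exact h1 x hx v hv
    | zero => rw [br_zero_left]; exact Submodule.zero_mem _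
    | add y z _ _ hy hz => rw [br_add_left]; exact add_mem hy hz
    | smul c y _ hy => rw [br_smul_left]; exact Submodule.smul_mem _ _ hy
  -- evaluation of basic sums at the point `(0, b₀)`
  have hterm : ∀ (g : Fin q → F) (b b₀ : Fin q),
      (g b • ff F p q (b : ℤ)) ((⟨0, hp0⟩ : Fin p), b₀) = if b = b₀ then g b else 0 := by
    intro g b b₀
    rw [Pi.smul_apply, smul_eq_mul, ff_apply]
    by_cases hb : b = b₀
    · subst hb
      rw [if_pos rfl, if_pos rfl]
      show g b * (1 - (((b : ℕ) : ℤ) : F)) ^ (0 : ℕ) = g b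
      rw [pow_zero, mul_one]
    · rw [if_neg hb, if_neg
        (fun hc => hb (Fin.ext (by exact_mod_cast hc.symm : (b : ℕ) = (b₀ : ℕ))))]
      exact mul_zero _
  have hcollapse : ∀ (g : Fin q → F) (b₀ : Fin q),
      (∑ b : Fin q, g b • ff F p q (b : ℤ)) ((⟨0, hp0⟩ : Fin p), b₀) = g b₀ := by
    intro g b₀
    rw [Finset.sum_apply, Finset.sum_congr rfl (fun b _ => hterm g b b₀),
      Finset.sum_ite_eq' Finset.univ b₀ g, if_pos (Finset.mem_univ b₀)]
  -- part 3
  have hSet : S = Set.range (fun b : Fin q => ff F p q (b : ℤ)) := by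
    ext x
    constructor
    · rintro ⟨j, hj0, hj1, rfl⟩
      refine ⟨⟨j.toNat, by omega⟩, ?_⟩
      exact congrArg (ff F p q) (show ((j.toNat : ℕ) : ℤ) = j by omega)
    · rintro ⟨b, rfl⟩
      exact ⟨(b : ℤ), Int.natCast_nonneg _, by have := b.isLt; omega, rfl⟩
  have hli : LinearIndependent F (fun b : Fin q => ff F p q (b : ℤ)) := by
    rw [Fintype.linearIndependent_iff]
    intro g hg b₀
    have h := congrFun hg ((⟨0, hp0⟩ : Fin p), b₀)
    rw [hcollapse g b₀, Pi.zero_apply] at h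
    exact h
  have part3 : Module.finrank F (Submodule.span F S) = p ^ n2 := by
    rw [hSet, finrank_span_eq_card hli, Fintype.card_fin]
  -- part 4
  have hEE : ∀ i : ℤ, -1 ≤ i → i ≤ (p ^ n2 : ℤ) - 2 →
      phiMap F p q (EE F q i) = -(ff F p q (i + 1)) := by
    intro i h1 h2
    unfold EE
    rw [dif_pos ⟨h1, by omega⟩, phiMap_single]
    exact congrArg Neg.neg
      (congrArg (ff F p q) (show (((i + 1).toNat : ℕ) : ℤ) = i + 1 by omega))
  have hker : ∀ w, phiMap F p q w = 0 → w = 0 := by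
    intro w hw
    funext b₀
    have h := congrFun hw ((⟨0, hp0⟩ : Fin p), b₀)
    rw [phiMap_apply, Pi.neg_apply, hcollapse w b₀, Pi.zero_apply, neg_eq_zero] at h
    rw [h, Pi.zero_apply]
  have hinj : Function.Injective (phiMap F p q) := by
    rw [← LinearMap.ker_eq_bot]
    apply (Submodule.eq_bot_iff _).mpr
    intro w hw
    exact hker w (LinearMap.mem_ker.mp hw)
  have hperterm : ∀ a b : Fin q,
      phiMap F p q (bBW F q a b) = br F p q (ff F p q (a : ℤ)) (ff F p q (b : ℤ)) := by
    intro a b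
    have hbr := br_ff p hp (K := F) q (a : ℤ) (b : ℤ) (Int.natCast_nonneg _)
      (by exact_mod_cast a.isLt) (Int.natCast_nonneg _) (by exact_mod_cast b.isLt)
    unfold bBW
    rw [map_smul]
    unfold EE
    by_cases hm : (-1 : ℤ) ≤ ((a : ℤ) - 1) + ((b : ℤ) - 1) ∧
        ((a : ℤ) - 1) + ((b : ℤ) - 1) ≤ (q : ℤ) - 2
    · rw [dif_pos hm, phiMap_single, hbr, smul_neg, ← neg_smul]
      congr 1
      · rw [← Int.cast_neg, coefW ((a : ℤ)) ((b : ℤ))]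
      · exact congrArg (ff F p q)
          (show (((((a : ℤ) - 1) + ((b : ℤ) - 1) + 1).toNat : ℕ) : ℤ)
              = (a : ℤ) + (b : ℤ) - 1 by omega)
    · rw [dif_neg hm, map_zero, smul_zero, hbr, ff_eq_zero p q _ (by omega), smul_zero]
  have hhom : ∀ w1 w2 : Wsp F q,
      phiMap F p q (brW F q w1 w2) = br F p q (phiMap F p q w1) (phiMap F p q w2) := by
    intro w1 w2
    have eL : phiMap F p q (brW F q w1 w2)
        = ∑ a : Fin q, ∑ b : Fin q,
            (w1 a * w2 b) • br F p q (ff F p q (a : ℤ)) (ff F p q (b : ℤ)) := by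
      unfold brW
      rw [map_sum]
      apply Finset.sum_congr rfl; intro a _
      rw [map_sum]
      apply Finset.sum_congr rfl; intro b _
      rw [map_smul, hperterm]
    have eR : br F p q (phiMap F p q w1) (phiMap F p q w2)
        = ∑ a : Fin q, ∑ b : Fin q,
            (w1 a * w2 b) • br F p q (ff F p q (a : ℤ)) (ff F p q (b : ℤ)) := by
      rw [phiMap_apply F p q w1, phiMap_apply F p q w2, br_neg_left, br_neg_right, neg_neg,
        br_sum_left]
      apply Finset.sum_congr rfl; intro a _
      rw [br_smul_left, br_sum_right, Finset.smul_sum]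
      apply Finset.sum_congr rfl; intro b _
      rw [br_smul_right, smul_smul]
    rw [eL, eR]
  exact ⟨part1, part2, part3, ⟨phiMap F p q, hEE, hinj, hhom⟩⟩
end
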